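/- arXiv:1906.08750 — 2 statements merged into one kernel-verified Lean document; each statement's English description precedes it below -/
import Mathlib

section
/- Let a > 0, β > 0, C ≥ 0, V ≥ 0, and let F, G : [0,a] → ℝ be differentiable, nonnegative functions satisfying F'(t) ≤ -β·G(t) + C·F(t) + C·V and G'(t) ≤ C·G(t) + C·V for all t ∈ [0,a]. Then, setting γ = (1 + C·a·e^{C a})/β, one has t·G(t) ≤ e^{C a}·(γ·F(0) + C·V·(γ + a)·a) for all t ∈ [0,a]. In particular G(t) ≤ C'/t for t ∈ (0,a], where C' depends only on a, β, C, V and F(0) (but not on G(0)). -/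
theorem stmt_1 (a β C V : ℝ) (ha : 0 < a) (hβ : 0 < β) (hC : 0 ≤ C) (hV : 0 ≤ V)
    (F G F' G' : ℝ → ℝ)
    (hF : ∀ t ∈ Set.Icc 0 a, HasDerivWithinAt F (F' t) (Set.Icc 0 a) t)
    (hG : ∀ t ∈ Set.Icc 0 a, HasDerivWithinAt G (G' t) (Set.Icc 0 a) t)
    (hFpos : ∀ t ∈ Set.Icc 0 a, 0 ≤ F t) (hGpos : ∀ t ∈ Set.Icc 0 a, 0 ≤ G t)
    (hF' : ∀ t ∈ Set.Icc 0 a, F' t ≤ -β * G t + C * F t + C * V)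
    (hG' : ∀ t ∈ Set.Icc 0 a, G' t ≤ C * G t + C * V) :
    (∀ t ∈ Set.Icc 0 a,
      t * G t ≤ Real.exp (C * a) *
        (((1 + C * a * Real.exp (C * a)) / β) * F 0 +
          C * V * (((1 + C * a * Real.exp (C * a)) / β) + a) * a)) ∧
    ∃ C' : ℝ, 0 ≤ C' ∧ ∀ t ∈ Set.Ioc 0 a, G t ≤ C' / t := by
  set γ : ℝ := (1 + C * a * Real.exp (C * a)) / β with hγdef
  have hγβ : γ * β = 1 + C * a * Real.exp (C * a) := by
    rw [hγdef]; exact div_mul_cancel₀ _ hβ.ne'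
  have hγ0 : 0 ≤ γ := by
    apply div_nonneg _ hβ.le
    positivity
  -- define H
  set H : ℝ → ℝ := fun t => Real.exp (-(C * t)) * (t * G t + γ * F t) - C * V * (γ + a) * t
    with hHdef
  set H' : ℝ → ℝ := fun t =>
    Real.exp (-(C * t)) * ((G t + t * G' t + γ * F' t) - C * (t * G t + γ * F t))
      - C * V * (γ + a) with hH'def
  have hder : ∀ t ∈ Set.Icc (0:ℝ) a, HasDerivWithinAt H (H' t) (Set.Icc 0 a) t := by
    intro t ht
    have hexp : HasDerivAt (fun x => Real.exp (-(C * x))) (Real.exp (-(C * t)) * -(C * 1)) t :=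
      (((hasDerivAt_id t).const_mul C).neg).exp
    have hQ : HasDerivWithinAt (fun x => x * G x + γ * F x)
        (1 * G t + t * G' t + γ * F' t) (Set.Icc 0 a) t :=
      ((hasDerivWithinAt_id t _).mul (hG t ht)).add ((hF t ht).const_mul γ)
    have hlin : HasDerivWithinAt (fun x => C * V * (γ + a) * x)
        (C * V * (γ + a) * 1) (Set.Icc 0 a) t := (hasDerivWithinAt_id t _).const_mul _
    have := ((hexp.hasDerivWithinAt.mul hQ).sub hlin)
    refine this.congr_deriv ?_
    simp only [hH'def]
    ring
  -- key differential inequality H' ≤ 0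
  have hH'le : ∀ t ∈ Set.Icc (0:ℝ) a, H' t ≤ 0 := by
    intro t ht
    obtain ⟨ht0, hta⟩ := ht
    have hGt := hGpos t ⟨ht0, hta⟩
    have hFt := hFpos t ⟨ht0, hta⟩
    have h1 : G t + t * G' t + γ * F' t ≤
        G t + t * (C * G t + C * V) + γ * (-β * G t + C * F t + C * V) := by
      have := hG' t ⟨ht0, hta⟩
      have := hF' t ⟨ht0, hta⟩
      nlinarith [hG' t ⟨ht0, hta⟩, hF' t ⟨ht0, hta⟩]
    have hexp1 : (1:ℝ) ≤ Real.exp (C * a) := Real.one_le_exp (by positivity)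
    have h2 : G t + t * (C * G t + C * V) + γ * (-β * G t + C * F t + C * V)
        ≤ C * (t * G t + γ * F t) + C * V * (γ + a) := by
      have hc : 1 + t * C - γ * β ≤ 0 := by
        rw [hγβ]
        nlinarith [mul_le_mul_of_nonneg_left hta hC,
          mul_le_mul_of_nonneg_left hexp1 (mul_nonneg hC ha.le)]
      have e1 : (1 + t * C - γ * β) * G t ≤ 0 := mul_nonpos_of_nonpos_of_nonneg hc hGt
      have e2 : 0 ≤ C * V * (a - t) := mul_nonneg (mul_nonneg hC hV) (sub_nonneg.mpr hta)
      have e3 : 0 ≤ t * C * G t := mul_nonneg (mul_nonneg ht0 hC) hGt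
      linarith [e1, e2, e3]
    have h3 : (G t + t * G' t + γ * F' t) - C * (t * G t + γ * F t) ≤ C * V * (γ + a) := by
      linarith
    have hexp2 : Real.exp (-(C * t)) ≤ 1 := Real.exp_le_one_iff.mpr (by nlinarith)
    have hexppos : (0:ℝ) < Real.exp (-(C * t)) := Real.exp_pos _
    simp only [hH'def]
    have hCVγ : 0 ≤ C * V * (γ + a) := mul_nonneg (mul_nonneg hC hV) (add_nonneg hγ0 ha.le)
    rcases le_or_gt ((G t + t * G' t + γ * F' t) - C * (t * G t + γ * F t)) 0 with h | h
    · nlinarith [mul_nonpos_of_nonneg_of_nonpos hexppos.le h]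
    · nlinarith [mul_le_of_le_one_left h.le hexp2]
  -- H is antitone on Icc
  have hcont : ContinuousOn H (Set.Icc 0 a) := fun t ht => (hder t ht).continuousWithinAt
  have hanti : AntitoneOn H (Set.Icc 0 a) := by
    apply antitoneOn_of_deriv_nonpos (convex_Icc 0 a) hcont
    · rw [interior_Icc]
      intro x hx
      exact ((hder x (Set.Ioo_subset_Icc_self hx)).hasDerivAt
        (Icc_mem_nhds hx.1 hx.2)).differentiableAt.differentiableWithinAt
    · rw [interior_Icc]
      intro x hx
      rw [((hder x (Set.Ioo_subset_Icc_self hx)).hasDerivAt (Icc_mem_nhds hx.1 hx.2)).deriv]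
      exact hH'le x (Set.Ioo_subset_Icc_self hx)
  have hbound : ∀ t ∈ Set.Icc (0:ℝ) a,
      t * G t ≤ Real.exp (C * a) * (γ * F 0 + C * V * (γ + a) * a) := by
    intro t ht
    obtain ⟨ht0, hta⟩ := ht
    have h0 : H t ≤ H 0 := hanti (Set.left_mem_Icc.mpr ha.le) ⟨ht0, hta⟩ ht0
    have hH0 : H 0 = γ * F 0 := by simp [hHdef]
    have hQt : Real.exp (-(C * t)) * (t * G t + γ * F t) ≤ γ * F 0 + C * V * (γ + a) * t := by
      have := h0
      rw [hH0] at this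
      simp only [hHdef] at this ⊢
      linarith
    have hexppos : (0:ℝ) < Real.exp (-(C * t)) := Real.exp_pos _
    have hγF : 0 ≤ γ * F t := mul_nonneg hγ0 (hFpos t ⟨ht0, hta⟩)
    have htG : t * G t ≤ Real.exp (C * t) * (γ * F 0 + C * V * (γ + a) * t) := by
      have key : t * G t + γ * F t
          = Real.exp (C * t) * (Real.exp (-(C * t)) * (t * G t + γ * F t)) := by
        rw [← mul_assoc, ← Real.exp_add]
        simp
      have h2 : t * G t + γ * F t ≤ Real.exp (C * t) * (γ * F 0 + C * V * (γ + a) * t) := by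
        rw [key]
        exact mul_le_mul_of_nonneg_left hQt (Real.exp_pos _).le
      linarith
    have hmono : Real.exp (C * t) * (γ * F 0 + C * V * (γ + a) * t)
        ≤ Real.exp (C * a) * (γ * F 0 + C * V * (γ + a) * a) := by
      have he : Real.exp (C * t) ≤ Real.exp (C * a) :=
        Real.exp_le_exp.mpr (by nlinarith)
      have h1 : 0 ≤ γ * F 0 := mul_nonneg hγ0 (hFpos 0 (Set.left_mem_Icc.mpr ha.le))
      have h2 : C * V * (γ + a) * t ≤ C * V * (γ + a) * a := by
        apply mul_le_mul_of_nonneg_left hta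
        positivity
      have h3 : 0 ≤ C * V * (γ + a) * t := by positivity
      nlinarith [Real.exp_pos (C * t)]
    linarith
  constructor
  · intro t ht
    have := hbound t ht
    calc t * G t ≤ Real.exp (C * a) * (γ * F 0 + C * V * (γ + a) * a) := this
      _ = Real.exp (C * a) * (((1 + C * a * Real.exp (C * a)) / β) * F 0 +
          C * V * (((1 + C * a * Real.exp (C * a)) / β) + a) * a) := by rw [hγdef]
  · refine ⟨Real.exp (C * a) * (γ * F 0 + C * V * (γ + a) * a), ?_, ?_⟩
    · have h1 : 0 ≤ γ * F 0 := mul_nonneg hγ0 (hFpos 0 (Set.left_mem_Icc.mpr ha.le))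
      have h2 : 0 ≤ C * V * (γ + a) * a := by positivity
      positivity
    · intro t ht
      rw [le_div_iff₀ ht.1]
      calc G t * t = t * G t := mul_comm _ _
        _ ≤ _ := hbound t ⟨ht.1.le, ht.2⟩
end

section
/- Let f : ℝ → ℝ be twice continuously differentiable with compact support. Then ∫_ℝ (f'(x))⁴ dx ≤ 9 · (sup_ℝ |f|)² · ∫_ℝ (f''(x))² dx. -/
open MeasureTheory Real Set

theorem stmt_9 (f : ℝ → ℝ) (hf : ContDiff ℝ 2 f) (hsupp : HasCompactSupport f) :
    ∫ x : ℝ, deriv f x ^ 4 ≤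
      9 * (⨆ x : ℝ, |f x|) ^ 2 * ∫ x : ℝ, deriv (deriv f) x ^ 2 := by
  set f1 := deriv f with hf1def
  set f2 := deriv f1 with hf2def
  have hf1C : ContDiff ℝ 1 f1 := by
    have h2 : ContDiff ℝ ((1 : ℕ) + 1) f := by exact_mod_cast hf
    exact (contDiff_succ_iff_deriv.mp h2).2.2
  have hdf : ∀ x, HasDerivAt f (f1 x) x :=
    fun x => (hf.differentiable (by norm_num) x).hasDerivAt
  have hdf1 : ∀ x, HasDerivAt f1 (f2 x) x :=
    fun x => (hf1C.differentiable one_ne_zero x).hasDerivAt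
  have cf : Continuous f := hf.continuous
  have cf1 : Continuous f1 := hf1C.continuous
  have cf2 : Continuous f2 := hf1C.continuous_deriv le_rfl
  have s1 : HasCompactSupport f1 := hsupp.deriv
  have s2 : HasCompactSupport f2 := s1.deriv
  have s14 : HasCompactSupport (fun x => f1 x ^ 4) := s1.comp_left (g := (· ^ 4)) (by simp)
  have s12 : HasCompactSupport (fun x => f1 x ^ 2) := s1.comp_left (g := (· ^ 2)) (by simp)
  have s22 : HasCompactSupport (fun x => f2 x ^ 2) := s2.comp_left (g := (· ^ 2)) (by simp)
  have s2a : HasCompactSupport (fun x => |f2 x|) := s2.comp_left (g := (|·|)) (by simp)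
  -- the function g and its derivative
  set g : ℝ → ℝ := fun x => f x * f1 x ^ 3 with hgdef
  have hgC : ContDiff ℝ 1 g := (hf.of_le one_le_two).mul (hf1C.pow 3)
  have hgs : HasCompactSupport g := hsupp.mul_right
  have hg' : ∀ x, HasDerivAt g (f1 x ^ 4 + 3 * (f x * (f1 x ^ 2 * f2 x))) x := by
    intro x
    have : HasDerivAt (fun y => f y * f1 y ^ 3)
        (f1 x * f1 x ^ 3 + f x * (((3 : ℕ) : ℝ) * f1 x ^ (3 - 1) * f2 x)) x :=
      (hdf x).mul ((hdf1 x).pow 3)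
    convert this using 1
    push_cast
    ring
  -- integral of deriv g is zero
  have hintg : Integrable (deriv g) :=
    (hgC.continuous_deriv le_rfl).integrable_of_hasCompactSupport hgs.deriv
  have h0 : ∫ x : ℝ, deriv g x = 0 := by
    rw [← intervalIntegral.integral_Iic_add_Ioi (b := 0) hintg.integrableOn hintg.integrableOn,
      HasCompactSupport.integral_Iic_deriv_eq hgC hgs 0,
      HasCompactSupport.integral_Ioi_deriv_eq hgC hgs 0]
    ring
  have hderivg : deriv g = fun x => f1 x ^ 4 + 3 * (f x * (f1 x ^ 2 * f2 x)) :=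
    funext fun x => (hg' x).deriv
  -- integrability of the pieces
  have intA : Integrable (fun x => f1 x ^ 4) := (cf1.pow 4).integrable_of_hasCompactSupport s14
  have intB : Integrable (fun x => f x * (f1 x ^ 2 * f2 x)) :=
    (cf.mul ((cf1.pow 2).mul cf2)).integrable_of_hasCompactSupport hsupp.mul_right
  have intJ : Integrable (fun x => f2 x ^ 2) := (cf2.pow 2).integrable_of_hasCompactSupport s22
  have key : ∫ x : ℝ, f1 x ^ 4 = 3 * ∫ x : ℝ, -(f x * (f1 x ^ 2 * f2 x)) := by
    rw [hderivg] at h0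
    rw [integral_add intA (intB.const_mul 3), integral_const_mul] at h0
    rw [integral_neg]
    linarith
  -- the sup bound
  set M := ⨆ x : ℝ, |f x| with hMdef
  have hbdd : BddAbove (Set.range fun x => |f x|) :=
    cf.abs.bddAbove_range_of_hasCompactSupport hsupp.abs
  have hMle : ∀ x, |f x| ≤ M := fun x => le_ciSup hbdd x
  have hM0 : 0 ≤ M := (abs_nonneg (f 0)).trans (hMle 0)
  -- pointwise bound and monotonicity
  have intC : Integrable (fun x => M * (f1 x ^ 2 * |f2 x|)) :=
    (((cf1.pow 2).mul cf2.abs).integrable_of_hasCompactSupport (s12.mul_right)).const_mul M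
  have step1 : ∫ x : ℝ, -(f x * (f1 x ^ 2 * f2 x)) ≤ ∫ x : ℝ, M * (f1 x ^ 2 * |f2 x|) := by
    refine integral_mono intB.neg intC fun x => ?_
    have h2 : |f x * (f1 x ^ 2 * f2 x)| = |f x| * (f1 x ^ 2 * |f2 x|) := by
      rw [abs_mul, abs_mul, abs_pow, sq_abs]
    calc -(f x * (f1 x ^ 2 * f2 x)) ≤ |f x * (f1 x ^ 2 * f2 x)| := neg_le_abs _
      _ = |f x| * (f1 x ^ 2 * |f2 x|) := h2
      _ ≤ M * (f1 x ^ 2 * |f2 x|) := by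
          apply mul_le_mul_of_nonneg_right (hMle x); positivity
  -- Cauchy-Schwarz
  set I := ∫ x : ℝ, f1 x ^ 4 with hIdef
  set J := ∫ x : ℝ, f2 x ^ 2 with hJdef
  have hI0 : 0 ≤ I := integral_nonneg fun x => by positivity
  have hJ0 : 0 ≤ J := integral_nonneg fun x => by positivity
  have hmem1 : MemLp (fun x => f1 x ^ 2) (ENNReal.ofReal 2) volume :=
    (cf1.pow 2).memLp_of_hasCompactSupport s12
  have hmem2 : MemLp (fun x => |f2 x|) (ENNReal.ofReal 2) volume :=
    cf2.abs.memLp_of_hasCompactSupport s2a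
  have CS : ∫ x : ℝ, f1 x ^ 2 * |f2 x| ≤ Real.sqrt I * Real.sqrt J := by
    have hpq : Real.HolderConjugate 2 2 := by constructor <;> norm_num
    have := integral_mul_le_Lp_mul_Lq_of_nonneg hpq
      (f := fun x => f1 x ^ 2) (g := fun x => |f2 x|)
      (Filter.Eventually.of_forall fun x => by positivity)
      (Filter.Eventually.of_forall fun x => abs_nonneg _) hmem1 hmem2
    have e1 : ∫ x : ℝ, (f1 x ^ 2) ^ (2 : ℝ) = I := by
      rw [hIdef]; congr 1; funext x
      rw [show ((2:ℝ)) = ((2:ℕ):ℝ) by norm_num, Real.rpow_natCast]; ring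
    have e2 : ∫ x : ℝ, |f2 x| ^ (2 : ℝ) = J := by
      rw [hJdef]; congr 1; funext x
      rw [show ((2:ℝ)) = ((2:ℕ):ℝ) by norm_num, Real.rpow_natCast, sq_abs]
    rw [e1, e2, ← Real.sqrt_eq_rpow, ← Real.sqrt_eq_rpow] at this
    exact this
  -- combine
  have main : I ≤ 3 * M * (Real.sqrt I * Real.sqrt J) := by
    calc I = 3 * ∫ x : ℝ, -(f x * (f1 x ^ 2 * f2 x)) := key
      _ ≤ 3 * ∫ x : ℝ, M * (f1 x ^ 2 * |f2 x|) := by linarith [step1]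
      _ = 3 * M * ∫ x : ℝ, f1 x ^ 2 * |f2 x| := by rw [integral_const_mul]; ring
      _ ≤ 3 * M * (Real.sqrt I * Real.sqrt J) := by
          apply mul_le_mul_of_nonneg_left CS; positivity
  -- finish
  rcases eq_or_lt_of_le hI0 with hI | hI
  · rw [← hI]; positivity
  · have ha : 0 < Real.sqrt I := Real.sqrt_pos.mpr hI
    have haI : Real.sqrt I * Real.sqrt I = I := Real.mul_self_sqrt hI0
    have hbJ : Real.sqrt J * Real.sqrt J = J := Real.mul_self_sqrt hJ0
    have hle : Real.sqrt I ≤ 3 * M * Real.sqrt J := by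
      have h2 : Real.sqrt I * Real.sqrt I ≤ (3 * M * Real.sqrt J) * Real.sqrt I := by
        rw [haI]; calc I ≤ 3 * M * (Real.sqrt I * Real.sqrt J) := main
          _ = 3 * M * Real.sqrt J * Real.sqrt I := by ring
      exact le_of_mul_le_mul_right h2 ha
    have := mul_self_le_mul_self (Real.sqrt_nonneg I) hle
    rw [haI] at this
    calc I ≤ (3 * M * Real.sqrt J) * (3 * M * Real.sqrt J) := this
      _ = 9 * M ^ 2 * (Real.sqrt J * Real.sqrt J) := by ring
      _ = 9 * M ^ 2 * J := by rw [hbJ]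
end
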